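/- For an irrational ρ ∈ 𝕋^d, the weighted Birkhoff average of the character σ_j(θ) = e^{2πi j·θ} (with j ∈ ℤ^d, j ≠ 0) along the trajectory θ_n = θ₀ + nρ tends to 0 as N → ∞; for j = 0 it equals 1 for every N. -/

import Mathlib

open Finset Filter Complex

/-- The bump weight function `w^{[p]}`. -/
noncomputable def bumpW (p : ℝ) (t : ℝ) : ℝ :=
  if t ∈ Set.Ioo (0:ℝ) 1 then Real.exp (-(t * (1 - t)) ^ (-p)) else 0

/-- Normalized weights. -/
noncomputable def wbWeight (p : ℝ) (n N : ℕ) : ℝ :=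
  bumpW p ((n : ℝ) / N) / ∑ m ∈ range N, bumpW p ((m : ℝ) / N)


/-!
Along the orbit the character is `c * z ^ n` with `z = exp (2πi j·ρ)`, and `z ≠ 1` exactly because
`j·ρ ∉ ℤ`. Summation by parts bounds `‖∑ aₙ zⁿ‖` by `(|a_{N-1}| + ∑ |aₙ₊₁ - aₙ|) * 2 / ‖1 - z‖`.
The samples `bumpW p (n / N)` lie in `[0, 1]` and increase up to `n = N / 2` and decrease after,
so this bracket is at most `3`; after normalisation it is divided by the total mass
`∑ bumpW p (m / N)`, which tends to infinity since every sample with `m / N ∈ [1/3, 2/3]` is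
at least `bumpW p (1/3) > 0`.
-/

section SummationByParts

variable {𝕜 : Type*} [NormedField 𝕜]

lemma norm_geom_sum_le {z : 𝕜} (hz : z ≠ 1) (hz1 : ‖z‖ ≤ 1) (k : ℕ) :
    ‖∑ i ∈ range k, z ^ i‖ ≤ 2 / ‖1 - z‖ := by
  rw [geom_sum_eq hz k, norm_div, norm_sub_rev z 1]
  gcongr
  calc ‖z ^ k - 1‖ ≤ ‖z ^ k‖ + ‖(1 : 𝕜)‖ := norm_sub_le _ _
    _ ≤ 2 := by rw [norm_pow, norm_one]; linarith [pow_le_one₀ (n := k) (norm_nonneg z) hz1]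

lemma norm_sum_mul_pow_le (a : ℕ → 𝕜) {z : 𝕜} (hz : z ≠ 1) (hz1 : ‖z‖ ≤ 1) (N : ℕ) :
    ‖∑ n ∈ range N, a n * z ^ n‖ ≤
      (‖a (N - 1)‖ + ∑ i ∈ range (N - 1), ‖a (i + 1) - a i‖) * (2 / ‖1 - z‖) := by
  have hparts := sum_range_by_parts a (fun n => z ^ n) N
  simp only [smul_eq_mul] at hparts
  rw [hparts, add_mul, sum_mul]
  refine (norm_sub_le _ _).trans <|
    add_le_add ?_ ((norm_sum_le _ _).trans (sum_le_sum fun i _ => ?_))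
  all_goals rw [norm_mul]; gcongr; exact norm_geom_sum_le hz hz1 _

end SummationByParts

lemma sum_abs_sub_eq_of_unimodal {f : ℕ → ℝ} {k M : ℕ} (hkM : k ≤ M)
    (hmono : MonotoneOn f (Set.Iic k)) (hanti : AntitoneOn f (Set.Ici k)) :
    ∑ n ∈ range M, |f (n + 1) - f n| = 2 * f k - f 0 - f M := by
  have hup : ∀ n ∈ range k, |f (n + 1) - f n| = f (n + 1) - f n := fun n hn => by
    have hn := mem_range.1 hn
    exact abs_of_nonneg <| sub_nonneg.2 <|
      hmono (Set.mem_Iic.2 hn.le) (Set.mem_Iic.2 hn) n.le_succ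
  have hdown : ∀ n ∈ Ico k M, |f (n + 1) - f n| = -(f (n + 1) - f n) := fun n hn => by
    have hn := (mem_Ico.1 hn).1
    exact abs_of_nonpos <| sub_nonpos.2 <|
      hanti (Set.mem_Ici.2 hn) (Set.mem_Ici.2 (hn.trans n.le_succ)) n.le_succ
  rw [← sum_range_add_sum_Ico _ hkM, sum_congr rfl hup, sum_congr rfl hdown, sum_neg_distrib,
    sum_range_sub, sum_Ico_sub _ hkM]
  ring

lemma bumpW_nonneg (p t : ℝ) : 0 ≤ bumpW p t := by
  unfold bumpW; split_ifs
  exacts [(Real.exp_pos _).le, le_rfl]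

lemma bumpW_le_one (p t : ℝ) : bumpW p t ≤ 1 := by
  unfold bumpW; split_ifs with ht
  · exact Real.exp_le_one_iff.2 <| neg_nonpos.2 <|
      Real.rpow_nonneg (mul_pos ht.1 (sub_pos.2 ht.2)).le _
  · exact zero_le_one

section Bump

variable {p : ℝ}

lemma bumpW_pos {t : ℝ} (ht : t ∈ Set.Ioo 0 1) : 0 < bumpW p t := by
  rw [bumpW, if_pos ht]
  exact Real.exp_pos _

lemma bumpW_le_bumpW (hp : 0 < p) {s t : ℝ} (hst : s * (1 - s) ≤ t * (1 - t)) :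
    bumpW p s ≤ bumpW p t := by
  by_cases hs : s ∈ Set.Ioo 0 1
  · have hs_pos : 0 < s * (1 - s) := mul_pos hs.1 (sub_pos.2 hs.2)
    have ht : t ∈ Set.Ioo 0 1 := by constructor <;> nlinarith
    rw [bumpW, bumpW, if_pos hs, if_pos ht]
    exact Real.exp_le_exp.2 <| neg_le_neg <|
      Real.rpow_le_rpow_of_nonpos hs_pos hst (neg_nonpos.2 hp.le)
  · rw [bumpW, if_neg hs]
    exact bumpW_nonneg p t

lemma monotoneOn_bumpW_div (hp : 0 < p) (N : ℕ) :
    MonotoneOn (fun n : ℕ => bumpW p (n / N)) (Set.Iic (N / 2)) := by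
  intro m hm n hn hmn
  have hmn_le : m + n ≤ N := by simp only [Set.mem_Iic] at hm hn; omega
  have hsum : ((m : ℝ) + n) / N ≤ 1 :=
    div_le_one_of_le₀ (by exact_mod_cast hmn_le) N.cast_nonneg
  have hle : (m : ℝ) / N ≤ n / N := by gcongr
  rw [add_div] at hsum
  exact bumpW_le_bumpW hp (by nlinarith)

lemma antitoneOn_bumpW_div (hp : 0 < p) (N : ℕ) :
    AntitoneOn (fun n : ℕ => bumpW p (n / N)) (Set.Ici (N / 2)) := by
  intro m hm n hn hmn
  rcases hmn.eq_or_lt with rfl | hlt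
  · exact le_rfl
  rcases N.eq_zero_or_pos with rfl | hN
  · simp
  have hsum : 1 ≤ ((m : ℝ) + n) / N := by
    rw [one_le_div (by exact_mod_cast hN)]
    exact_mod_cast (by simp only [Set.mem_Ici] at hm hn; omega : N ≤ m + n)
  have hle : (m : ℝ) / N ≤ n / N := by gcongr
  rw [add_div] at hsum
  exact bumpW_le_bumpW hp (by nlinarith)

lemma sum_abs_sub_bumpW_div_le (hp : 0 < p) {N : ℕ} (hN : 0 < N) :
    ∑ n ∈ range (N - 1), |bumpW p ((n + 1 : ℕ) / N) - bumpW p (n / N)| ≤ 2 := by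
  rw [sum_abs_sub_eq_of_unimodal (f := fun n : ℕ => bumpW p (n / N)) (by omega)
    (monotoneOn_bumpW_div hp N) (antitoneOn_bumpW_div hp N)]
  linarith [bumpW_le_one p ((N / 2 : ℕ) / N), bumpW_nonneg p ((0 : ℕ) / N),
    bumpW_nonneg p ((N - 1 : ℕ) / N)]

end Bump

noncomputable def bumpMass (p : ℝ) (N : ℕ) : ℝ :=
  ∑ m ∈ range N, bumpW p (m / N)

lemma bumpMass_pos (p : ℝ) {N : ℕ} (hN : 2 ≤ N) : 0 < bumpMass p N := by
  have hN' : (1 : ℝ) < N := by exact_mod_cast hN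
  refine sum_pos' (fun n _ => bumpW_nonneg p _) ⟨1, mem_range.2 hN, bumpW_pos ?_⟩
  rw [Nat.cast_one]
  exact ⟨by positivity, (div_lt_one (by linarith)).2 hN'⟩

section Mass

variable {p : ℝ}

/-- `Icc ((N + 2) / 3) (2 * N / 3)` is the set of `n` with `n / N ∈ [1/3, 2/3]`. -/
lemma bumpW_third_mul_card_le_bumpMass (hp : 0 < p) {N : ℕ} (hN : 0 < N) :
    bumpW p (1 / 3) * #(Icc ((N + 2) / 3) (2 * N / 3)) ≤ bumpMass p N := by
  have hN' : (0 : ℝ) < N := by exact_mod_cast hN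
  have hsub : Icc ((N + 2) / 3) (2 * N / 3) ⊆ range N := fun m hm => by
    simp only [mem_Icc, mem_range] at hm ⊢
    omega
  have hmiddle : ∀ m ∈ Icc ((N + 2) / 3) (2 * N / 3), bumpW p (1 / 3) ≤ bumpW p (m / N) := by
    intro m hm
    simp only [mem_Icc] at hm
    have hlow : 1 / 3 ≤ (m : ℝ) / N := by
      rw [le_div_iff₀ hN']
      linarith [show (N : ℝ) ≤ 3 * m by exact_mod_cast (by omega : N ≤ 3 * m)]
    have hhigh : (m : ℝ) / N ≤ 2 / 3 := by
      rw [div_le_iff₀ hN']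
      linarith [show (3 : ℝ) * m ≤ 2 * N by exact_mod_cast (by omega : 3 * m ≤ 2 * N)]
    exact bumpW_le_bumpW hp (by nlinarith)
  calc bumpW p (1 / 3) * #(Icc ((N + 2) / 3) (2 * N / 3))
      = ∑ _m ∈ Icc ((N + 2) / 3) (2 * N / 3), bumpW p (1 / 3) := by
        rw [sum_const, nsmul_eq_mul, mul_comm]
    _ ≤ ∑ m ∈ Icc ((N + 2) / 3) (2 * N / 3), bumpW p (m / N) := sum_le_sum hmiddle
    _ ≤ bumpMass p N := sum_le_sum_of_subset_of_nonneg hsub fun _ _ _ => bumpW_nonneg p _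

lemma tendsto_bumpMass_atTop (hp : 0 < p) : Tendsto (bumpMass p) atTop atTop := by
  have hcard : Tendsto (fun N : ℕ => #(Icc ((N + 2) / 3) (2 * N / 3))) atTop atTop := by
    simp only [Nat.card_Icc]
    exact tendsto_atTop_atTop.2 fun b => ⟨3 * b + 9, fun N hN => by omega⟩
  refine tendsto_atTop_mono' atTop
    (eventually_atTop.2 ⟨1, fun N hN => bumpW_third_mul_card_le_bumpMass hp hN⟩) ?_
  exact (tendsto_natCast_atTop_atTop.comp hcard).const_mul_atTop
    (bumpW_pos ⟨by norm_num, by norm_num⟩)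

end Mass

lemma wbWeight_eq_div (p : ℝ) (n N : ℕ) : wbWeight p n N = bumpW p (n / N) / bumpMass p N := rfl

lemma sum_wbWeight (p : ℝ) {N : ℕ} (hN : 2 ≤ N) : ∑ n ∈ range N, wbWeight p n N = 1 := by
  simp only [wbWeight_eq_div, ← sum_div]
  exact div_self (bumpMass_pos p hN).ne'

section Decay

variable {p : ℝ} {z : ℂ}

lemma norm_sum_wbWeight_mul_pow_le (hp : 0 < p) (hz : z ≠ 1) (hz1 : ‖z‖ ≤ 1) {N : ℕ}
    (hN : 0 < N) :
    ‖∑ n ∈ range N, (wbWeight p n N : ℂ) * z ^ n‖ ≤ 6 / ‖1 - z‖ * (bumpMass p N)⁻¹ := by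
  set a : ℕ → ℂ := fun n => (bumpW p (n / N) : ℂ)
  have hfactor : ∑ n ∈ range N, (wbWeight p n N : ℂ) * z ^ n =
      ((bumpMass p N)⁻¹ : ℂ) * ∑ n ∈ range N, a n * z ^ n := by
    simp only [a, wbWeight_eq_div, mul_sum, ofReal_div]
    exact sum_congr rfl fun n _ => by ring
  have hlast : ‖a (N - 1)‖ ≤ 1 := by
    simpa [a, abs_of_nonneg (bumpW_nonneg _ _)] using bumpW_le_one p ((N - 1 : ℕ) / N)
  have hvar : ∑ i ∈ range (N - 1), ‖a (i + 1) - a i‖ ≤ 2 := by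
    simpa only [a, ← ofReal_sub, norm_real, Real.norm_eq_abs] using sum_abs_sub_bumpW_div_le hp hN
  have hmass : 0 ≤ bumpMass p N := sum_nonneg fun _ _ => bumpW_nonneg p _
  rw [hfactor, norm_mul, norm_inv, norm_real, Real.norm_of_nonneg hmass]
  calc (bumpMass p N)⁻¹ * ‖∑ n ∈ range N, a n * z ^ n‖
      ≤ (bumpMass p N)⁻¹ * ((1 + 2) * (2 / ‖1 - z‖)) := by
        gcongr
        exact (norm_sum_mul_pow_le a hz hz1 N).trans (by gcongr)
    _ = 6 / ‖1 - z‖ * (bumpMass p N)⁻¹ := by ring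

lemma tendsto_sum_wbWeight_mul_pow (hp : 0 < p) (hz : z ≠ 1) (hz1 : ‖z‖ ≤ 1) :
    Tendsto (fun N => ∑ n ∈ range N, (wbWeight p n N : ℂ) * z ^ n) atTop (nhds 0) := by
  refine squeeze_zero_norm' (eventually_atTop.2 ⟨1, fun N hN =>
    norm_sum_wbWeight_mul_pow_le hp hz hz1 hN⟩) ?_
  simpa using (tendsto_bumpMass_atTop hp).inv_tendsto_atTop.const_mul (6 / ‖1 - z‖)

end Decay

lemma norm_exp_two_pi_I_mul (x : ℝ) : ‖exp (2 * Real.pi * I * x)‖ = 1 := by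
  rw [show 2 * Real.pi * I * x = ((2 * Real.pi * x : ℝ) : ℂ) * I by push_cast; ring]
  exact norm_exp_ofReal_mul_I _

lemma exp_two_pi_I_mul_ne_one {x : ℝ} (hx : ∀ m : ℤ, x ≠ m) : exp (2 * Real.pi * I * x) ≠ 1 := by
  rw [Ne, exp_eq_one_iff]
  rintro ⟨m, hm⟩
  have h2πI : 2 * Real.pi * I ≠ 0 := by simp [I_ne_zero]
  exact hx m (by exact_mod_cast mul_left_cancel₀ h2πI (hm.trans (mul_comm _ _)))

lemma exp_two_pi_I_mul_sum_eq_mul_pow {d : ℕ} (j : Fin d → ℤ) (θ₀ ρ : Fin d → ℝ) (n : ℕ) :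
    exp (2 * Real.pi * I * ∑ i, (j i : ℂ) * ((θ₀ i : ℂ) + n * (ρ i : ℂ))) =
      exp (2 * Real.pi * I * ↑(∑ i, (j i : ℝ) * θ₀ i)) *
        exp (2 * Real.pi * I * ↑(∑ i, (j i : ℝ) * ρ i)) ^ n := by
  rw [← exp_nat_mul, ← exp_add]
  congr 1
  push_cast
  simp only [mul_add, sum_add_distrib, mul_sum, mul_left_comm (n : ℂ)]

theorem weighted_birkhoff_characters {d : ℕ} (p : ℝ) (hp : 1 ≤ p) (ρ θ₀ : Fin d → ℝ)
    (hirr : ∀ a : Fin d → ℤ, (∃ m : ℤ, (∑ i, (a i : ℝ) * ρ i) = (m : ℝ)) → a = 0)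
    (j : Fin d → ℤ) :
    (j ≠ 0 →
      Tendsto (fun N : ℕ => ∑ n ∈ range N, (wbWeight p n N : ℂ) *
          Complex.exp (2 * Real.pi * Complex.I * ∑ i, (j i : ℂ) * ((θ₀ i : ℂ) + n * (ρ i : ℂ))))
        atTop (nhds 0)) ∧
    (j = 0 → ∀ N : ℕ, 2 ≤ N →
      (∑ n ∈ range N, (wbWeight p n N : ℂ) *
          Complex.exp (2 * Real.pi * Complex.I * ∑ i, (j i : ℂ) * ((θ₀ i : ℂ) + n * (ρ i : ℂ))))
        = 1) := by
  simp only [exp_two_pi_I_mul_sum_eq_mul_pow, mul_left_comm _ (exp _), ← mul_sum]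
  refine ⟨fun hj => ?_, ?_⟩
  · have hz : exp (2 * Real.pi * I * ↑(∑ i, (j i : ℝ) * ρ i)) ≠ 1 :=
      exp_two_pi_I_mul_ne_one fun m hm => hj (hirr j ⟨m, hm⟩)
    have hdecay := tendsto_sum_wbWeight_mul_pow (by linarith) hz (norm_exp_two_pi_I_mul _).le
    simpa using hdecay.const_mul (exp (2 * Real.pi * I * ↑(∑ i, (j i : ℝ) * θ₀ i)))
  · rintro rfl N hN
    simpa using congrArg ((↑) : ℝ → ℂ) (sum_wbWeight p hN)
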